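/- Fix ℏ > 0, let φ₁ : ℝ → ℝ be a smooth diffeomorphism and φ₂ : ℝ → ℝ smooth, and let V be the substitution operator (Vψ)(x') = |φ₁'(x')|^{1/2} e^{−(i/ℏ) φ₂(x')} ψ(φ₁(x')). Set f = φ₁' ∘ φ₁^{-1} and g = φ₂' ∘ φ₁^{-1}, and for ψ ∈ C_c^∞(ℝ) define the Weyl (symmetrically) ordered operator of the classical momentum observable P(x,p) = f(x) p − g(x): (P_W ψ)(x) = −iℏ f(x) ψ'(x) − (iℏ/2) f'(x) ψ(x) − g(x) ψ(x), i.e., P_W = (1/2)(f(q̂)p̂ + p̂ f(q̂)) − g(q̂) with q̂ = multiplication by x and p̂ = −iℏ d/dx. Then V intertwines P_W with the momentum operator in the new coordinates: V(P_W ψ) = −iℏ (Vψ)' for every ψ ∈ C_c^∞(ℝ), i.e., V P_W V^{-1} = −iℏ d/dx'. -/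

import Mathlib

open Complex
open Topology Filter

/-- The substitution operator `(Vψ)(x') = |φ₁'(x')|^{1/2} e^{−(i/ℏ)φ₂(x')} ψ(φ₁(x'))`
associated to the point canonical transformation with `x = φ₁(x')`. -/
noncomputable def Vop (ℏ : ℝ) (φ₁ φ₂ : ℝ → ℝ) (ψ : ℝ → ℂ) : ℝ → ℂ := fun x' =>
  ((Real.sqrt |deriv φ₁ x'| : ℝ) : ℂ) *
    Complex.exp (-(Complex.I / (ℏ : ℂ)) * ((φ₂ x' : ℝ) : ℂ)) * ψ (φ₁ x')

/-- The Weyl (symmetrically) ordered operator of the classical momentum observable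
`P(x,p) = f(x)p − g(x)`, i.e. `P_W = (1/2)(f(q̂)p̂ + p̂f(q̂)) − g(q̂)` with `q̂ = x·`
and `p̂ = −iℏ d/dx`, acting as
`(P_Wψ)(x) = −iℏ f(x)ψ'(x) − (iℏ/2) f'(x)ψ(x) − g(x)ψ(x)`. -/
noncomputable def weylMomentum (ℏ : ℝ) (f g : ℝ → ℝ) (ψ : ℝ → ℂ) : ℝ → ℂ := fun x =>
  -(Complex.I * (ℏ : ℂ)) * ((f x : ℝ) : ℂ) * deriv ψ x
    - (Complex.I * (ℏ : ℂ) / 2) * ((deriv f x : ℝ) : ℂ) * ψ x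
    - ((g x : ℝ) : ℂ) * ψ x

/-- Fix ℏ > 0, a smooth diffeomorphism `φ₁` and smooth `φ₂`, and set
`f = φ₁' ∘ φ₁⁻¹`, `g = φ₂' ∘ φ₁⁻¹`.  The substitution operator `V` intertwines the
Weyl-ordered momentum observable `P_W` (of `P(x,p) = f(x)p − g(x)`) with the momentum
operator in the new coordinates: for every `ψ ∈ C_c^∞(ℝ)`,
`V(P_Wψ) = −iℏ (Vψ)'`, i.e. `V P_W V⁻¹ = −iℏ d/dx'`. -/
theorem V_intertwines_weyl_momentum (ℏ : ℝ) (hℏ : 0 < ℏ) (φ₁ φ₂ : ℝ → ℝ)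
    (hφ₁smooth : ContDiff ℝ (⊤ : ℕ∞) φ₁) (hφ₁bij : Function.Bijective φ₁)
    (hφ₁deriv : ∀ x, deriv φ₁ x ≠ 0) (hφ₂smooth : ContDiff ℝ (⊤ : ℕ∞) φ₂)
    (f g : ℝ → ℝ)
    (hf : f = fun x => deriv φ₁ (Function.invFun φ₁ x))
    (hg : g = fun x => deriv φ₂ (Function.invFun φ₁ x))
    (ψ : ℝ → ℂ) (hψs : ContDiff ℝ (⊤ : ℕ∞) ψ) (hψc : HasCompactSupport ψ) :
    ∀ x' : ℝ, Vop ℏ φ₁ φ₂ (weylMomentum ℏ f g ψ) x'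
      = -(Complex.I * (ℏ : ℂ)) * deriv (Vop ℏ φ₁ φ₂ ψ) x' := by
  intro x'
  have ha : deriv φ₁ x' ≠ 0 := hφ₁deriv x'
  set a := deriv φ₁ x' with ha_def
  have hφ₁s : ContDiff ℝ (⊤:ℕ∞) φ₁ := hφ₁smooth.of_le (by simp)
  have hd1 : ContDiff ℝ (⊤:ℕ∞) (deriv φ₁) := (contDiff_infty_iff_deriv.mp hφ₁s).2
  have h1 : HasDerivAt φ₁ a x' := (hφ₁smooth.differentiable (by simp) x').hasDerivAt
  have h2 : HasDerivAt (deriv φ₁) (deriv (deriv φ₁) x') x' :=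
    (hd1.differentiable (by simp) x').hasDerivAt
  set b := deriv (deriv φ₁) x' with hb_def
  have h3 : HasDerivAt φ₂ (deriv φ₂ x') x' :=
    (hφ₂smooth.differentiable (by simp) x').hasDerivAt
  set c := deriv φ₂ x' with hc_def
  set ε : ℝ := if 0 < a then 1 else -1 with hε_def
  have hεa : 0 < ε * a := by
    rcases ha.lt_or_gt with h | h
    · simp only [hε_def, if_neg (not_lt.2 h.le)]; nlinarith
    · simp only [hε_def, if_pos h]; nlinarith
  have habs' : ∀ u : ℝ, 0 < ε * u → |u| = ε * u := by
    intro u hu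
    by_cases h : 0 < a
    · simp only [hε_def, if_pos h, one_mul] at hu ⊢
      exact abs_of_pos hu
    · simp only [hε_def, if_neg h, neg_one_mul, neg_mul] at hu ⊢
      rw [abs_of_neg (by linarith)]; ring
  set sa := Real.sqrt (ε * a) with hsa_def
  have hsa : sa ≠ 0 := ne_of_gt (Real.sqrt_pos.mpr hεa)
  have hsa2 : sa ^ 2 = ε * a := Real.sq_sqrt hεa.le
  have hev : ∀ᶠ y in 𝓝 x', 0 < ε * deriv φ₁ y := by
    have hcont : ContinuousAt (fun y => ε * deriv φ₁ y) x' :=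
      (continuous_const.mul (hd1.continuous)).continuousAt
    exact hcont.eventually_const_lt hεa
  have hsq0 : HasDerivAt (fun y => Real.sqrt (ε * deriv φ₁ y))
      (ε * b / (2 * sa)) x' := by
    have := (Real.hasDerivAt_sqrt (ne_of_gt hεa)).comp x' (h2.const_mul ε)
    exact this.congr_deriv (by rw [hsa_def]; ring)
  have hsq : HasDerivAt (fun y => Real.sqrt |deriv φ₁ y|) (ε * b / (2 * sa)) x' := by
    apply hsq0.congr_of_eventuallyEq
    filter_upwards [hev] with y hy
    rw [habs' _ hy]
  have hS : HasDerivAt (fun y => ((Real.sqrt |deriv φ₁ y| : ℝ) : ℂ))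
      ((ε * b / (2 * sa) : ℝ) : ℂ) x' := hsq.ofReal_comp
  have hE : HasDerivAt (fun y => Complex.exp (-(Complex.I / (ℏ:ℂ)) * ((φ₂ y : ℝ) : ℂ)))
      (Complex.exp (-(Complex.I / (ℏ:ℂ)) * ((φ₂ x' : ℝ):ℂ)) * (-(Complex.I / (ℏ:ℂ)) * (c:ℂ)))
      x' := ((h3.ofReal_comp).const_mul (-(Complex.I / (ℏ:ℂ)))).cexp
  have hΨ : HasDerivAt (fun y => ψ (φ₁ y)) (a • deriv ψ (φ₁ x')) x' :=
    HasDerivAt.scomp x' ((hψs.differentiable (by simp) (φ₁ x')).hasDerivAt) h1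
  have hV : HasDerivAt (Vop ℏ φ₁ φ₂ ψ)
      ((((ε * b / (2 * sa) : ℝ) : ℂ) *
          Complex.exp (-(Complex.I / (ℏ:ℂ)) * ((φ₂ x' : ℝ):ℂ)) +
        ((Real.sqrt |a| : ℝ) : ℂ) *
          (Complex.exp (-(Complex.I / (ℏ:ℂ)) * ((φ₂ x' : ℝ):ℂ)) *
            (-(Complex.I / (ℏ:ℂ)) * (c:ℂ)))) * ψ (φ₁ x') +
       ((Real.sqrt |a| : ℝ) : ℂ) *
          Complex.exp (-(Complex.I / (ℏ:ℂ)) * ((φ₂ x' : ℝ):ℂ)) * (a • deriv ψ (φ₁ x'))) x' :=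
    (hS.mul hE).mul hΨ
  -- derivative of f at φ₁ x'
  have hli : Function.LeftInverse (Function.invFun φ₁) φ₁ :=
    Function.leftInverse_invFun hφ₁bij.1
  have hstrict : HasStrictDerivAt φ₁ a x' := hφ₁smooth.contDiffAt.hasStrictDerivAt (by simp)
  have hinv : HasStrictDerivAt (Function.invFun φ₁) a⁻¹ (φ₁ x') :=
    hstrict.to_local_left_inverse ha (Filter.Eventually.of_forall fun y => hli y)
  have hfD : HasDerivAt f (a⁻¹ • b) (φ₁ x') := by
    rw [hf]
    have h2' : HasDerivAt (deriv φ₁) b (Function.invFun φ₁ (φ₁ x')) := by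
      rw [hli x']; exact h2
    exact HasDerivAt.scomp (φ₁ x') h2' hinv.hasDerivAt
  have hfval : f (φ₁ x') = a := by rw [hf]; simp [hli x', ha_def]
  have hgval : g (φ₁ x') = c := by rw [hg]; simp [hli x', hc_def]
  have hfder : deriv f (φ₁ x') = a⁻¹ * b := by rw [hfD.deriv]; simp [smul_eq_mul]
  rw [hV.deriv]
  simp only [Vop, weylMomentum, hfval, hgval, hfder]
  rw [habs' a hεa, ← hsa_def]
  have hℏc : (ℏ : ℂ) ≠ 0 := by exact_mod_cast hℏ.ne'
  have hac : (a : ℂ) ≠ 0 := by exact_mod_cast ha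
  have hsac : (sa : ℂ) ≠ 0 := by exact_mod_cast hsa
  have hsa2c : (sa : ℂ) ^ 2 = (ε : ℂ) * (a : ℂ) := by exact_mod_cast hsa2
  simp only [real_smul]
  push_cast
  set E := Complex.exp (-(Complex.I / (ℏ:ℂ)) * ((φ₂ x' : ℝ):ℂ)) with hE_def
  set P := ψ (φ₁ x') with hP_def
  set D := deriv ψ (φ₁ x') with hD_def
  field_simp
  linear_combination (-4*Complex.I*(ℏ:ℂ)^2*(b:ℂ)*P*E) * hsa2c + (2*Complex.I*(ℏ:ℂ)^2*(b:ℂ)*P*E) * hsa2c +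
    (-4*(ℏ:ℂ)*(a:ℂ)*(c:ℂ)*P*E*(sa:ℂ)^2) * Complex.I_sq +
    (-E*Complex.I*(ℏ:ℂ)*(b:ℂ)*P + 2*E*Complex.I*(ℏ:ℂ)^2*(b:ℂ)*P) * hsa2c +
    (4*(sa:ℂ)^2*E*(ℏ:ℂ)*(a:ℂ)*P*(c:ℂ) - 2*(sa:ℂ)^2*E*(a:ℂ)*P*(c:ℂ)) * Complex.I_sq
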